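/- Fix c < 0 and p ∈ (0, Φ(c)) where Φ is the standard normal CDF. For each a ∈ ℝ let b(a) be the unique real number such that ∫_{-∞}^{c} φ(η) Φ(b(a) - aη) dη = p. Then b : ℝ → ℝ is well-defined (by strict monotonicity in b and the intermediate value theorem) and strictly decreasing in a. -/
import Mathlib


open MeasureTheory

/-- The standard normal density. -/
noncomputable def phi (x : ℝ) : ℝ := Real.exp (-x ^ 2 / 2) / Real.sqrt (2 * Real.pi)

/-- The standard normal cumulative distribution function. -/
noncomputable def Phi (x : ℝ) : ℝ := ∫ t in Set.Iic x, phi t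

open Set Filter Topology

lemma phi_pos (x : ℝ) : 0 < phi x :=
  div_pos (Real.exp_pos _) (Real.sqrt_pos.2 (by positivity))

lemma continuous_phi : Continuous phi := by
  unfold phi; fun_prop

lemma integrable_phi : Integrable phi := by
  have h : Integrable (fun x : ℝ => Real.exp (-(1/2 : ℝ) * x ^ 2)) :=
    integrable_exp_neg_mul_sq (by norm_num)
  have h2 := h.div_const (Real.sqrt (2 * Real.pi))
  refine h2.congr (Filter.Eventually.of_forall fun x => ?_)
  unfold phi
  ring_nf

lemma integral_phi : ∫ x, phi x = 1 := by
  have h := integral_gaussian (1/2 : ℝ)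
  have hsq : Real.sqrt (Real.pi / (1/2 : ℝ)) = Real.sqrt (2 * Real.pi) := by
    congr 1; ring
  have heq : ∀ x : ℝ, phi x = Real.exp (-(1/2 : ℝ) * x ^ 2) / Real.sqrt (2 * Real.pi) := by
    intro x; unfold phi; ring_nf
  simp only [heq]
  rw [integral_div, h, hsq, div_self]
  positivity

lemma my_setIntegral_pos {s : Set ℝ} (hs : MeasurableSet s) (hvol : 0 < volume s)
    {f : ℝ → ℝ} (hf : IntegrableOn f s) (h0 : ∀ x ∈ s, 0 < f x) :
    0 < ∫ x in s, f x := by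
  rw [setIntegral_pos_iff_support_of_nonneg_ae
    ((ae_restrict_iff' hs).2 (Filter.Eventually.of_forall fun x hx => (h0 x hx).le)) hf]
  exact hvol.trans_le (measure_mono fun x hx => ⟨(h0 x hx).ne', hx⟩)

lemma Phi_nonneg (x : ℝ) : 0 ≤ Phi x :=
  setIntegral_nonneg measurableSet_Iic fun t _ => (phi_pos t).le

lemma Phi_pos (x : ℝ) : 0 < Phi x := by
  refine my_setIntegral_pos measurableSet_Iic ?_ integrable_phi.integrableOn
    (fun t _ => phi_pos t)
  simp [Real.volume_Iic]

lemma Phi_le_one (x : ℝ) : Phi x ≤ 1 := by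
  rw [← integral_phi]
  exact setIntegral_le_integral integrable_phi
    (Filter.Eventually.of_forall fun t => (phi_pos t).le)

lemma Phi_strictMono : StrictMono Phi := by
  intro x y hxy
  have hsplit : Phi y = Phi x + ∫ t in Ioc x y, phi t := by
    unfold Phi
    rw [← Iic_union_Ioc_eq_Iic hxy.le,
      setIntegral_union (Iic_disjoint_Ioc le_rfl) measurableSet_Ioc
        integrable_phi.integrableOn integrable_phi.integrableOn]
  have hpos : 0 < ∫ t in Ioc x y, phi t := by
    refine my_setIntegral_pos measurableSet_Ioc ?_ integrable_phi.integrableOn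
      (fun t _ => phi_pos t)
    rw [Real.volume_Ioc]
    exact ENNReal.ofReal_pos.2 (sub_pos.2 hxy)
  linarith

lemma Phi_as_primitive (x : ℝ) : Phi x = Phi 0 + ∫ t in (0:ℝ)..x, phi t := by
  rw [← intervalIntegral.integral_Iic_sub_Iic integrable_phi.integrableOn
    integrable_phi.integrableOn]
  unfold Phi; ring

lemma Phi_continuous : Continuous Phi := by
  have h := integrable_phi.continuous_primitive (0 : ℝ)
  have : Phi = fun x => Phi 0 + ∫ t in (0:ℝ)..x, phi t := funext Phi_as_primitive
  rw [this]
  exact continuous_const.add h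

lemma Phi_tendsto_atTop : Tendsto Phi atTop (𝓝 1) := by
  have h : Tendsto (fun x : ℝ => ∫ t in (0:ℝ)..x, phi t) atTop
      (𝓝 (∫ t in Ioi (0:ℝ), phi t)) :=
    intervalIntegral_tendsto_integral_Ioi 0 integrable_phi.integrableOn tendsto_id
  have h2 : Tendsto (fun x : ℝ => Phi 0 + ∫ t in (0:ℝ)..x, phi t) atTop
      (𝓝 (Phi 0 + ∫ t in Ioi (0:ℝ), phi t)) := tendsto_const_nhds.add h
  have heq : Phi 0 + ∫ t in Ioi (0:ℝ), phi t = 1 := by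
    rw [← integral_phi]
    exact intervalIntegral.integral_Iic_add_Ioi integrable_phi.integrableOn integrable_phi.integrableOn
  rw [← heq]
  exact h2.congr fun x => (Phi_as_primitive x).symm

lemma Phi_tendsto_atBot : Tendsto Phi atBot (𝓝 0) := by
  have h : Tendsto (fun x : ℝ => ∫ t in x..(0:ℝ), phi t) atBot
      (𝓝 (∫ t in Iic (0:ℝ), phi t)) :=
    intervalIntegral_tendsto_integral_Iic 0 integrable_phi.integrableOn tendsto_id
  have h2 : Tendsto (fun x : ℝ => Phi 0 - ∫ t in x..(0:ℝ), phi t) atBot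
      (𝓝 (Phi 0 - ∫ t in Iic (0:ℝ), phi t)) := tendsto_const_nhds.sub h
  have heq : Phi 0 - ∫ t in Iic (0:ℝ), phi t = 0 := by simp [Phi]
  rw [← heq]
  refine h2.congr fun x => ?_
  have := intervalIntegral.integral_Iic_sub_Iic (f := phi) (μ := volume) (a := x) (b := 0)
    integrable_phi.integrableOn integrable_phi.integrableOn
  unfold Phi; linarith [this]

section F

variable (c : ℝ)

lemma integrableOn_F (a y : ℝ) :
    IntegrableOn (fun η => phi η * Phi (y - a * η)) (Iic c) := by
  refine Integrable.mono integrable_phi.integrableOn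
    (Continuous.aestronglyMeasurable ?_).restrict
    (Filter.Eventually.of_forall fun η => ?_)
  · exact continuous_phi.mul (Phi_continuous.comp (by fun_prop))
  · rw [Real.norm_eq_abs, Real.norm_eq_abs, abs_mul,
      abs_of_nonneg (phi_pos η).le, abs_of_nonneg (Phi_nonneg _)]
    exact mul_le_of_le_one_right (phi_pos η).le (Phi_le_one _)

lemma F_strictMono_y (a : ℝ) {y y' : ℝ} (h : y < y') :
    (∫ η in Iic c, phi η * Phi (y - a * η)) < ∫ η in Iic c, phi η * Phi (y' - a * η) := by
  have hdiff : 0 < ∫ η in Iic c,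
      (phi η * Phi (y' - a * η) - phi η * Phi (y - a * η)) := by
    refine my_setIntegral_pos measurableSet_Iic (by simp [Real.volume_Iic])
      ((integrableOn_F c a y').sub (integrableOn_F c a y)) fun η _ => ?_
    have : Phi (y - a * η) < Phi (y' - a * η) := Phi_strictMono (by linarith)
    nlinarith [phi_pos η]
  rw [integral_sub (integrableOn_F c a y') (integrableOn_F c a y)] at hdiff
  linarith

lemma F_strictMono_a (hc : c < 0) {a a' : ℝ} (ha : a < a') (y : ℝ) :
    (∫ η in Iic c, phi η * Phi (y - a * η)) < ∫ η in Iic c, phi η * Phi (y - a' * η) := by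
  have hdiff : 0 < ∫ η in Iic c,
      (phi η * Phi (y - a' * η) - phi η * Phi (y - a * η)) := by
    refine my_setIntegral_pos measurableSet_Iic (by simp [Real.volume_Iic])
      ((integrableOn_F c a' y).sub (integrableOn_F c a y)) fun η hη => ?_
    have hη0 : η < 0 := lt_of_le_of_lt hη hc
    have : Phi (y - a * η) < Phi (y - a' * η) := Phi_strictMono (by nlinarith)
    nlinarith [phi_pos η]
  rw [integral_sub (integrableOn_F c a' y) (integrableOn_F c a y)] at hdiff
  linarith

lemma F_continuous (a : ℝ) :
    Continuous fun y => ∫ η in Iic c, phi η * Phi (y - a * η) := by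
  refine continuous_iff_continuousAt.2 fun y₀ => ?_
  refine continuousAt_of_dominated (bound := phi) ?_ ?_ integrable_phi.integrableOn ?_
  · exact Filter.Eventually.of_forall fun y =>
      ((continuous_phi.mul (Phi_continuous.comp (by fun_prop))).aestronglyMeasurable).restrict
  · refine Filter.Eventually.of_forall fun y => Filter.Eventually.of_forall fun η => ?_
    rw [Real.norm_eq_abs, abs_mul, abs_of_nonneg (phi_pos η).le, abs_of_nonneg (Phi_nonneg _)]
    exact mul_le_of_le_one_right (phi_pos η).le (Phi_le_one _)
  · refine Filter.Eventually.of_forall fun η => ?_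
    exact (continuous_const.mul (Phi_continuous.comp (by fun_prop))).continuousAt

lemma F_tendsto_atTop (a : ℝ) :
    Tendsto (fun y => ∫ η in Iic c, phi η * Phi (y - a * η)) atTop (𝓝 (Phi c)) := by
  have key : Tendsto (fun y => ∫ η in Iic c, phi η * Phi (y - a * η)) atTop
      (𝓝 (∫ η in Iic c, phi η * 1)) := by
    refine tendsto_integral_filter_of_dominated_convergence phi ?_ ?_
      integrable_phi.integrableOn ?_
    · exact Filter.Eventually.of_forall fun y =>
        ((continuous_phi.mul (Phi_continuous.comp (by fun_prop))).aestronglyMeasurable).restrict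
    · refine Filter.Eventually.of_forall fun y => Filter.Eventually.of_forall fun η => ?_
      rw [Real.norm_eq_abs, abs_mul, abs_of_nonneg (phi_pos η).le, abs_of_nonneg (Phi_nonneg _)]
      exact mul_le_of_le_one_right (phi_pos η).le (Phi_le_one _)
    · refine Filter.Eventually.of_forall fun η => ?_
      have h1 : Tendsto (fun y : ℝ => y - a * η) atTop atTop :=
        tendsto_atTop_add_const_right atTop (-(a * η)) tendsto_id
      exact (Phi_tendsto_atTop.comp h1).const_mul (phi η)
  simpa [Phi] using key

lemma F_tendsto_atBot (a : ℝ) :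
    Tendsto (fun y => ∫ η in Iic c, phi η * Phi (y - a * η)) atBot (𝓝 0) := by
  have key : Tendsto (fun y => ∫ η in Iic c, phi η * Phi (y - a * η)) atBot
      (𝓝 (∫ η in Iic c, phi η * 0)) := by
    refine tendsto_integral_filter_of_dominated_convergence phi ?_ ?_
      integrable_phi.integrableOn ?_
    · exact Filter.Eventually.of_forall fun y =>
        ((continuous_phi.mul (Phi_continuous.comp (by fun_prop))).aestronglyMeasurable).restrict
    · refine Filter.Eventually.of_forall fun y => Filter.Eventually.of_forall fun η => ?_
      rw [Real.norm_eq_abs, abs_mul, abs_of_nonneg (phi_pos η).le, abs_of_nonneg (Phi_nonneg _)]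
      exact mul_le_of_le_one_right (phi_pos η).le (Phi_le_one _)
    · refine Filter.Eventually.of_forall fun η => ?_
      have h1 : Tendsto (fun y : ℝ => y - a * η) atBot atBot :=
        tendsto_atBot_add_const_right atBot (-(a * η)) tendsto_id
      exact (Phi_tendsto_atBot.comp h1).const_mul (phi η)
  simpa using key

end F

/-- For `c < 0` and `p ∈ (0, Φ(c))`, for each `a` there is a unique `b(a)` with
`∫_{-∞}^{c} φ(η) Φ(b(a) - aη) dη = p`, and the resulting function `b` is strictly
decreasing in `a`. -/
theorem stmt_17 (c : ℝ) (hc : c < 0) (p : ℝ) (hp : p ∈ Set.Ioo 0 (Phi c)) :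
    (∀ a : ℝ, ∃! y : ℝ, (∫ η in Set.Iic c, phi η * Phi (y - a * η)) = p) ∧
    (∀ b : ℝ → ℝ, (∀ a : ℝ, (∫ η in Set.Iic c, phi η * Phi (b a - a * η)) = p) →
      StrictAnti b) := by
  obtain ⟨hp0, hpc⟩ := hp
  constructor
  · intro a
    set G := fun y => ∫ η in Set.Iic c, phi η * Phi (y - a * η) with hG
    obtain ⟨y₁, hy₁⟩ := ((F_tendsto_atBot c a).eventually_lt_const hp0).exists
    obtain ⟨y₂, hy₂⟩ := ((F_tendsto_atTop c a).eventually_const_lt hpc).exists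
    have hsub : Set.uIcc (G y₁) (G y₂) ⊆ G '' Set.uIcc y₁ y₂ :=
      intermediate_value_uIcc (F_continuous c a).continuousOn
    have hpmem : p ∈ Set.uIcc (G y₁) (G y₂) :=
      Set.Icc_subset_uIcc ⟨hy₁.le, hy₂.le⟩
    obtain ⟨y, _, hy⟩ := hsub hpmem
    refine ⟨y, hy, fun z hz => ?_⟩
    by_contra hne
    have hz' : G z = p := hz
    rcases lt_or_gt_of_ne hne with h | h
    · have := F_strictMono_y c a h
      change G z < G y at this
      rw [hy, hz'] at this
      exact lt_irrefl p this
    · have := F_strictMono_y c a h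
      change G y < G z at this
      rw [hy, hz'] at this
      exact lt_irrefl p this
  · intro b hb a a' haa'
    by_contra hle
    push_neg at hle
    have h1 : (∫ η in Set.Iic c, phi η * Phi (b a - a * η)) <
        ∫ η in Set.Iic c, phi η * Phi (b a - a' * η) := F_strictMono_a c hc haa' (b a)
    have h2 : (∫ η in Set.Iic c, phi η * Phi (b a - a' * η)) ≤
        ∫ η in Set.Iic c, phi η * Phi (b a' - a' * η) := by
      rcases eq_or_lt_of_le hle with h | h
      · rw [h]
      · exact (F_strictMono_y c a' h).le
    rw [hb a, hb a'] at *
    linarith [h1.trans_le h2]
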